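/- arXiv:2512.09756 — 6 statements merged into one kernel-verified Lean document; each statement's English description precedes it below -/
import Mathlib

section
/- Let D ≥ 1 and let u : Fin D → ℝ, with softmax weights w_d(β) = exp(β·u_d) / Σ_{i=1}^{D} exp(β·u_i) and ū = (1/D)·Σ_{i=1}^{D} u_i. Then for each d, the remainder function β ↦ w_d(β) − 1/D − (β/D)·(u_d − ū) is O(β²) as β → 0 (i.e., it is big-O of β ↦ β² in the neighborhood filter of 0). -/
open Real Finset Asymptotics

/-- The first-order Taylor remainder of the softmax weight at `β = 0` is `O(β²)`. -/
theorem softmax_taylor_remainder_isBigO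
    (D : ℕ) (hD : 1 ≤ D) (u : Fin D → ℝ)
    (w : Fin D → ℝ → ℝ)
    (hw : ∀ d β, w d β = Real.exp (β * u d) / ∑ i, Real.exp (β * u i))
    (ubar : ℝ) (hubar : ubar = (1 / (D : ℝ)) * ∑ i, u i)
    (d : Fin D) :
    (fun β : ℝ => w d β - 1 / (D : ℝ) - (β / (D : ℝ)) * (u d - ubar))
      =O[nhds (0 : ℝ)] (fun β : ℝ => β ^ 2) := by
  have hDpos : (0 : ℝ) < (D : ℝ) := by exact_mod_cast hD
  set f : ℝ → ℝ := fun β => Real.exp (β * u d) / ∑ i, Real.exp (β * u i) with hf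
  -- denominator at 0
  have hS0 : (∑ i, Real.exp ((0:ℝ) * u i)) = (D : ℝ) := by
    simp [Finset.card_univ]
  have hS0ne : (∑ i, Real.exp ((0:ℝ) * u i)) ≠ 0 := by
    rw [hS0]; exact ne_of_gt hDpos
  -- analyticity at 0
  have hA : AnalyticAt ℝ f 0 := by
    apply AnalyticAt.div
    · exact (analyticAt_id.mul analyticAt_const).rexp
    · exact Finset.analyticAt_fun_sum _ fun i _ =>
        (analyticAt_id.mul analyticAt_const).rexp
    · exact hS0ne
  obtain ⟨p, hp⟩ := hA
  -- derivative of f at 0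
  have hN : HasDerivAt (fun β : ℝ => Real.exp (β * u d)) (u d) 0 := by
    have h := (hasDerivAt_mul_const (u d) : HasDerivAt _ _ (0:ℝ)).exp
    simpa using h
  have hS : HasDerivAt (fun β : ℝ => ∑ i, Real.exp (β * u i)) (∑ i, u i) 0 := by
    apply HasDerivAt.fun_sum
    intro i _
    have h := (hasDerivAt_mul_const (u i) : HasDerivAt _ _ (0:ℝ)).exp
    simpa using h
  have hf' : HasDerivAt f ((u d - ubar) / (D : ℝ)) 0 := by
    have := hN.fun_div hS hS0ne
    refine this.congr_deriv (Eq.symm ?_)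
    rw [hS0, hubar]
    simp only [zero_mul, Real.exp_zero, one_mul]
    rw [div_eq_div_iff (ne_of_gt hDpos) (by positivity)]
    have h2 : (D:ℝ)^2 * (D:ℝ)⁻¹ = (D:ℝ) := by
      rw [pow_two, mul_assoc, mul_inv_cancel₀ (ne_of_gt hDpos), mul_one]
    ring_nf
    rw [h2]
  have hderiv : (p 1 fun _ => (1:ℝ)) = (u d - ubar) / (D : ℝ) :=
    hp.hasDerivAt.unique hf'
  have hf0 : f 0 = 1 / (D : ℝ) := by
    simp only [hf, hS0]
    simp
  -- Taylor with n = 2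
  have hO := hp.isBigO_sub_partialSum_pow 2
  have heq : (fun β : ℝ => w d β - 1 / (D : ℝ) - (β / (D : ℝ)) * (u d - ubar))
      = fun β : ℝ => f ((0:ℝ) + β) - p.partialSum 2 β := by
    funext β
    have hps : p.partialSum 2 β = (p 0 fun _ => β) + (p 1 fun _ => β) := by
      simp [FormalMultilinearSeries.partialSum, Finset.sum_range_succ]
    have h0 : (p 0 fun _ => β) = f 0 := hp.coeff_zero _
    have h1 : (p 1 fun _ => β) = β * ((u d - ubar) / (D : ℝ)) := by
      have : (fun _ : Fin 1 => β) = fun i : Fin 1 => β • (1:ℝ) := by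
        funext i; simp
      rw [this, (p 1).map_smul_univ, hderiv]
      simp
    rw [hps, h0, h1, hf0, hw, zero_add]
    simp only [hf]
    ring
  rw [heq]
  calc (fun β : ℝ => f ((0:ℝ) + β) - p.partialSum 2 β)
      =O[nhds (0:ℝ)] (fun β : ℝ => ‖β‖ ^ 2) := hO
    _ =O[nhds (0:ℝ)] (fun β : ℝ => β ^ 2) := by
        apply IsBigO.of_bound 1
        filter_upwards with β
        simp [abs_pow, sq_abs]
end

section
/- Let D ≥ 1, let u, s : Fin D → ℝ, with softmax weights w_d(β) = exp(β·u_d) / Σ_{i=1}^{D} exp(β·u_i). Define F(β) = Σ_{d=1}^{D} s_d·(w_d(β))². Then F(0) = (1/D²)·Σ_{d=1}^{D} s_d, and F is differentiable at β = 0 with F′(0) = (2/D)·Cov(u,s), where Cov(u,s) = (1/D)·Σ_{d=1}^{D} (u_d − ū)·(s_d − s̄) with ū = (1/D)·Σ_d u_d and s̄ = (1/D)·Σ_d s_d. -/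
open Real Finset

/-- For `F(β) = Σ_d s_d (w_d β)²`, we have `F(0) = (1/D²) Σ_d s_d` and
`F` is differentiable at `0` with `F'(0) = (2/D)·Cov(u,s)`. -/
theorem improvement_value_and_deriv_at_zero
    (D : ℕ) (hD : 1 ≤ D) (u s : Fin D → ℝ)
    (w : Fin D → ℝ → ℝ)
    (hw : ∀ d β, w d β = Real.exp (β * u d) / ∑ i, Real.exp (β * u i))
    (F : ℝ → ℝ) (hF : ∀ β, F β = ∑ d, s d * (w d β) ^ 2)
    (ubar sbar cov : ℝ)
    (hubar : ubar = (1 / (D : ℝ)) * ∑ d, u d)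
    (hsbar : sbar = (1 / (D : ℝ)) * ∑ d, s d)
    (hcov : cov = (1 / (D : ℝ)) * ∑ d, (u d - ubar) * (s d - sbar)) :
    F 0 = (1 / (D : ℝ) ^ 2) * ∑ d, s d ∧
      HasDerivAt F ((2 / (D : ℝ)) * cov) 0 := by
  have hD0 : (D:ℝ) ≠ 0 := Nat.cast_ne_zero.mpr (by omega)
  have hFfun : F = fun β => ∑ d, s d * (Real.exp (β * u d) / ∑ i, Real.exp (β * u i)) ^ 2 := by
    funext β; rw [hF]; exact Finset.sum_congr rfl fun d _ => by rw [hw]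
  subst hFfun
  have hnum : ∀ d : Fin D, HasDerivAt (fun β : ℝ => Real.exp (β * u d)) (u d) 0 := by
    intro d
    have h := ((hasDerivAt_id (0:ℝ)).mul_const (u d)).exp
    simpa using h
  have hS : HasDerivAt (fun β : ℝ => ∑ i, Real.exp (β * u i)) (∑ i, u i) 0 := by
    simpa using HasDerivAt.fun_sum (fun i (_ : i ∈ Finset.univ) => hnum i)
  have hne : (∑ i, Real.exp ((0:ℝ) * u i)) ≠ 0 := by
    simp [hD0]
  have hFd := HasDerivAt.fun_sum (fun d (_ : d ∈ (Finset.univ : Finset (Fin D))) =>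
    (((hnum d).fun_div hS hne).fun_pow 2).const_mul (s d))
  constructor
  · simp [Finset.mul_sum, div_pow]
    exact Finset.sum_congr rfl fun d _ => by ring
  · refine hFd.congr_deriv (Eq.symm ?_)
    subst hcov hubar hsbar
    simp only [zero_mul, Real.exp_zero, Finset.sum_const, Finset.card_univ,
      Fintype.card_fin, nsmul_eq_mul, mul_one, one_mul, pow_one]
    norm_num
    rw [Finset.mul_sum, Finset.mul_sum, ← sub_eq_zero, ← Finset.sum_sub_distrib]
    have hterm : ∀ x : Fin D,
        (2 / (D:ℝ) * (((D:ℝ))⁻¹ * ((u x - ((D:ℝ))⁻¹ * ∑ d, u d) * (s x - ((D:ℝ))⁻¹ * ∑ d, s d))) -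
          s x * (2 * ((D:ℝ))⁻¹ * ((u x * (D:ℝ) - ∑ d, u d) / (D:ℝ) ^ 2)))
        = (-(2 / (D:ℝ) ^ 3 * ∑ d, s d)) * u x + 2 / (D:ℝ) ^ 4 * (∑ d, u d) * (∑ d, s d) := by
      intro x; field_simp; ring
    rw [Finset.sum_congr rfl fun x _ => hterm x, Finset.sum_add_distrib, ← Finset.mul_sum,
      Finset.sum_const, Finset.card_univ, Fintype.card_fin, nsmul_eq_mul]
    field_simp
    ring
end

section
/- Let D ≥ 1, let u, s : Fin D → ℝ, with softmax weights w_d(β) = exp(β·u_d) / Σ_{i=1}^{D} exp(β·u_i), and let F(β) = Σ_{d=1}^{D} s_d·(w_d(β))². Then the remainder β ↦ F(β) − (1/D²)·Σ_{d=1}^{D} s_d − β·(2/D)·Cov(u,s) is O(β²) as β → 0, where Cov(u,s) = (1/D)·Σ_{d=1}^{D} (u_d − ū)·(s_d − s̄) with ū = (1/D)·Σ_d u_d and s̄ = (1/D)·Σ_d s_d. In other words, to second order in β, the difference in expected linearized improvement between the residual–softmax weights and the uniform weights equals (2β/D)·Cov(u,s). -/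
open Real Finset Asymptotics

/-- The first-order Taylor remainder of `F(β) = Σ_d s_d (w_d β)²` at `β = 0` is `O(β²)`:
to second order in `β`, the improvement difference over uniform weights equals
`(2β/D)·Cov(u,s)`. -/
theorem improvement_taylor_remainder_isBigO
    (D : ℕ) (hD : 1 ≤ D) (u s : Fin D → ℝ)
    (w : Fin D → ℝ → ℝ)
    (hw : ∀ d β, w d β = Real.exp (β * u d) / ∑ i, Real.exp (β * u i))
    (F : ℝ → ℝ) (hF : ∀ β, F β = ∑ d, s d * (w d β) ^ 2)
    (ubar sbar cov : ℝ)
    (hubar : ubar = (1 / (D : ℝ)) * ∑ d, u d)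
    (hsbar : sbar = (1 / (D : ℝ)) * ∑ d, s d)
    (hcov : cov = (1 / (D : ℝ)) * ∑ d, (u d - ubar) * (s d - sbar)) :
    (fun β : ℝ => F β - (1 / (D : ℝ) ^ 2) * (∑ d, s d) - β * ((2 / (D : ℝ)) * cov))
      =O[nhds (0 : ℝ)] (fun β : ℝ => β ^ 2) := by
  have hD0 : (D : ℝ) ≠ 0 := Nat.cast_ne_zero.mpr (by omega)
  have hFe : F = fun β => ∑ d, s d * (Real.exp (β * u d) / ∑ i, Real.exp (β * u i)) ^ 2 := by
    funext β; rw [hF]; exact Finset.sum_congr rfl fun d _ => by rw [hw]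
  have hE0 : (∑ i, Real.exp ((0:ℝ) * u i)) = (D : ℝ) := by simp
  -- analyticity
  have hA : AnalyticAt ℝ F 0 := by
    rw [hFe]
    apply Finset.analyticAt_fun_sum
    intro d _
    apply AnalyticAt.mul analyticAt_const
    apply AnalyticAt.pow
    apply AnalyticAt.div
    · exact ((analyticAt_id).mul analyticAt_const).rexp
    · exact Finset.analyticAt_fun_sum _ fun i _ => ((analyticAt_id).mul analyticAt_const).rexp
    · rw [hE0]; exact hD0
  -- value at 0
  have hF0 : F 0 = (1 / (D : ℝ) ^ 2) * (∑ d, s d) := by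
    rw [hFe]; simp [hE0, div_pow, div_eq_mul_inv, ← Finset.sum_mul, mul_comm]
  -- derivative at 0
  set A := ∑ d, u d with hA'
  have hEd : HasDerivAt (fun β => ∑ i, Real.exp (β * u i)) (∑ i, Real.exp ((0:ℝ) * u i) * u i) 0 :=
    HasDerivAt.fun_sum fun i _ => (hasDerivAt_mul_const (u i)).exp
  have hterm : ∀ d : Fin D, HasDerivAt (fun β => s d * (Real.exp (β * u d) / ∑ i, Real.exp (β * u i)) ^ 2)
      (s d * ((2:ℕ) * (Real.exp ((0:ℝ) * u d) / ∑ i, Real.exp ((0:ℝ) * u i)) ^ 1 *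
        ((Real.exp ((0:ℝ) * u d) * u d * (∑ i, Real.exp ((0:ℝ) * u i)) -
          Real.exp ((0:ℝ) * u d) * (∑ i, Real.exp ((0:ℝ) * u i) * u i)) /
          (∑ i, Real.exp ((0:ℝ) * u i)) ^ 2))) 0 := by
    intro d
    exact ((((hasDerivAt_mul_const (u d)).exp).div hEd (by rw [hE0]; exact hD0)).pow 2).const_mul (s d)
  have hFd : HasDerivAt F (∑ d, s d * ((2:ℕ) * (Real.exp ((0:ℝ) * u d) / ∑ i, Real.exp ((0:ℝ) * u i)) ^ 1 *
        ((Real.exp ((0:ℝ) * u d) * u d * (∑ i, Real.exp ((0:ℝ) * u i)) -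
          Real.exp ((0:ℝ) * u d) * (∑ i, Real.exp ((0:ℝ) * u i) * u i)) /
          (∑ i, Real.exp ((0:ℝ) * u i)) ^ 2))) 0 := by
    rw [hFe]; exact HasDerivAt.fun_sum fun d _ => hterm d
  -- simplify derivative value
  have hderiv_val : (∑ d, s d * ((2:ℕ) * (Real.exp ((0:ℝ) * u d) / ∑ i, Real.exp ((0:ℝ) * u i)) ^ 1 *
        ((Real.exp ((0:ℝ) * u d) * u d * (∑ i, Real.exp ((0:ℝ) * u i)) -
          Real.exp ((0:ℝ) * u d) * (∑ i, Real.exp ((0:ℝ) * u i) * u i)) /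
          (∑ i, Real.exp ((0:ℝ) * u i)) ^ 2))) = (2 / (D : ℝ)) * cov := by
    have hexp : ∀ d : Fin D, Real.exp ((0:ℝ) * u d) = 1 := fun d => by simp
    simp only [hexp, hE0, one_mul, mul_one, pow_one, Finset.sum_const, Finset.card_univ,
      Fintype.card_fin, nsmul_eq_mul, Nat.cast_ofNat]
    rw [← hA']
    have expand : ∑ d, (u d - ubar) * (s d - sbar)
        = (∑ d, u d * s d) - ubar * (∑ d, s d) - sbar * A + D * (ubar * sbar) := by
      have h1 : ∀ d : Fin D, (u d - ubar) * (s d - sbar)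
          = u d * s d - ubar * s d - sbar * u d + ubar * sbar := fun d => by ring
      simp_rw [h1]
      rw [Finset.sum_add_distrib, Finset.sum_sub_distrib, Finset.sum_sub_distrib,
        ← Finset.mul_sum, ← Finset.mul_sum, Finset.sum_const, Finset.card_univ,
        Fintype.card_fin, nsmul_eq_mul]
    have hterm2 : ∀ d : Fin D, s d * (2 * (1 / (D:ℝ)) * ((u d * (D:ℝ) - A) / (D:ℝ) ^ 2))
        = (2 / (D:ℝ)^2) * (u d * s d) - (2 / (D:ℝ)^3) * (A * s d) := fun d => by
      field_simp
    simp_rw [hterm2]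
    rw [Finset.sum_sub_distrib, ← Finset.mul_sum, ← Finset.mul_sum, hcov, expand,
      hubar, hsbar, ← Finset.mul_sum]
    field_simp
    ring
  -- assemble with power series
  obtain ⟨p, hp⟩ := hA
  have hbig := hp.isBigO_sub_partialSum_pow 2
  have heq : (fun β : ℝ => F β - (1 / (D : ℝ) ^ 2) * (∑ d, s d) - β * ((2 / (D : ℝ)) * cov))
      = fun y : ℝ => F (0 + y) - p.partialSum 2 y := by
    funext y
    have hps : p.partialSum 2 y = F 0 + y * (p 1 fun _ => 1) := by
      rw [FormalMultilinearSeries.partialSum]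
      rw [Finset.sum_range_succ, Finset.sum_range_one]
      have h0 : (p 0 fun _ => y) = F 0 := hp.coeff_zero _
      have h1 : (p 1 fun _ => y) = y ^ 1 • (p 1 fun _ => 1) := by
        rw [FormalMultilinearSeries.apply_eq_pow_smul_coeff]; rfl
      rw [h0, h1]
      simp
    have hd1 : (p 1 fun _ => 1) = (2 / (D : ℝ)) * cov := by
      have := hp.hasDerivAt.unique hFd
      rw [this, hderiv_val]
    rw [hps, hd1, zero_add, hF0]
    ring
  rw [heq]
  calc (fun y : ℝ => F (0 + y) - p.partialSum 2 y) =O[nhds 0] (fun y : ℝ => ‖y‖ ^ 2) := hbig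
    _ =O[nhds 0] (fun y : ℝ => y ^ 2) := by
        apply Asymptotics.isBigO_of_le
        intro x; simp [abs_pow]
end

section
/- Let D ≥ 1 and let u, s : Fin D → ℝ, with softmax weights w_d(β) = exp(β·u_d) / Σ_{i=1}^{D} exp(β·u_i). If Cov(u,s) = (1/D)·Σ_{d=1}^{D} (u_d − ū)·(s_d − s̄) > 0, then there exists β₀ > 0 such that for all β with 0 < β < β₀, Σ_{d=1}^{D} s_d·(w_d(β))² > (1/D²)·Σ_{d=1}^{D} s_d. That is, for all sufficiently small positive inverse-temperature β, the residual–softmax weighting yields strictly larger one-step expected improvement than the uniform weighting. -/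
open Real Finset

/-- If `Cov(u,s) > 0`, then for all sufficiently small `β > 0`, residual–softmax
weighting yields strictly larger one-step expected improvement than uniform weighting. -/
theorem softmax_beats_uniform_for_small_beta
    (D : ℕ) (hD : 1 ≤ D) (u s : Fin D → ℝ)
    (w : Fin D → ℝ → ℝ)
    (hw : ∀ d β, w d β = Real.exp (β * u d) / ∑ i, Real.exp (β * u i))
    (ubar sbar cov : ℝ)
    (hubar : ubar = (1 / (D : ℝ)) * ∑ d, u d)
    (hsbar : sbar = (1 / (D : ℝ)) * ∑ d, s d)
    (hcov : cov = (1 / (D : ℝ)) * ∑ d, (u d - ubar) * (s d - sbar))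
    (hpos : 0 < cov) :
    ∃ β₀ > (0 : ℝ), ∀ β : ℝ, 0 < β → β < β₀ →
      (1 / (D : ℝ) ^ 2) * (∑ d, s d) < ∑ d, s d * (w d β) ^ 2 := by
  have hD0 : (0 : ℝ) < (D : ℝ) := by exact_mod_cast Nat.lt_of_lt_of_le Nat.zero_lt_one hD
  set h : ℝ → ℝ := fun β =>
    (D : ℝ) ^ 2 * ∑ d, s d * (Real.exp (β * u d)) ^ 2
      - (∑ d, s d) * (∑ d, Real.exp (β * u d)) ^ 2 with hh_def
  -- derivative data at 0
  have hexp : ∀ d : Fin D, HasDerivAt (fun β => Real.exp (β * u d)) (u d) 0 := by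
    intro d
    have := ((hasDerivAt_id (0:ℝ)).mul_const (u d)).exp
    simpa using this
  have hsum1 : HasDerivAt (fun β => ∑ d, s d * (Real.exp (β * u d)) ^ 2)
      (∑ d, s d * (2 * u d)) 0 := by
    apply HasDerivAt.fun_sum
    intro d _
    have h1 : HasDerivAt (fun β => (Real.exp (β * u d)) ^ 2)
        (2 * (Real.exp (0 * u d)) ^ 1 * u d) 0 := (hexp d).pow 2
    have h1' : HasDerivAt (fun β => (Real.exp (β * u d)) ^ 2) (2 * u d) 0 := by
      simpa using h1
    simpa [mul_comm, mul_assoc] using h1'.const_mul (s d)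
  have hsum2 : HasDerivAt (fun β => (∑ d, Real.exp (β * u d)) ^ 2)
      (2 * (D : ℝ) * ∑ d, u d) 0 := by
    have hS : HasDerivAt (fun β => ∑ d, Real.exp (β * u d)) (∑ d, u d) 0 :=
      HasDerivAt.fun_sum (fun d _ => hexp d)
    have := hS.pow 2
    simpa [Finset.card_univ, mul_comm, mul_assoc, mul_left_comm, Pi.pow_def] using this
  have hderiv : HasDerivAt h
      ((D : ℝ) ^ 2 * ∑ d, s d * (2 * u d) - (∑ d, s d) * (2 * (D : ℝ) * ∑ d, u d)) 0 :=
    (hsum1.const_mul _).sub (hsum2.const_mul _)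
  set L : ℝ := (D : ℝ) ^ 2 * ∑ d, s d * (2 * u d) - (∑ d, s d) * (2 * (D : ℝ) * ∑ d, u d)
    with hL_def
  have hL : L = 2 * (D : ℝ) ^ 3 * cov := by
    have hDne : (D : ℝ) ≠ 0 := ne_of_gt hD0
    rw [hL_def, hcov, hubar, hsbar]
    rw [Finset.mul_sum, Finset.mul_sum]
    have : ∀ d : Fin D, (u d - 1 / (D:ℝ) * ∑ i, u i) * (s d - 1 / (D:ℝ) * ∑ i, s i)
        = u d * s d - (1/(D:ℝ)) * (∑ i, u i) * s d - (1/(D:ℝ)) * (∑ i, s i) * u d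
          + (1/(D:ℝ))^2 * (∑ i, u i) * (∑ i, s i) := by
      intro d; ring
    rw [Finset.sum_congr rfl (fun d _ => this d)]
    simp only [Finset.sum_add_distrib, Finset.sum_sub_distrib, ← Finset.mul_sum,
      Finset.sum_const, Finset.card_univ, Fintype.card_fin, nsmul_eq_mul]
    field_simp
    rw [show (∑ x, s x * 2 * u x) = 2 * ∑ x, u x * s x from by
      rw [Finset.mul_sum]; exact Finset.sum_congr rfl (fun d _ => by ring)]
    ring
  have hL0 : 0 < L := by
    rw [hL]
    positivity
  have hh0 : h 0 = 0 := by
    simp [hh_def, Finset.card_univ, Fintype.card_fin]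
    ring
  -- slope tends to L, so eventually positive on punctured nbhd
  have hslope := hasDerivAt_iff_tendsto_slope.mp hderiv
  have hev : ∀ᶠ β in nhdsWithin 0 (Set.Ioi 0), 0 < h β := by
    have h1 : ∀ᶠ β in nhdsWithin (0:ℝ) {0}ᶜ, 0 < slope h 0 β :=
      hslope (eventually_gt_nhds hL0)
    have h2 : ∀ᶠ β in nhdsWithin (0:ℝ) (Set.Ioi 0), 0 < slope h 0 β :=
      h1.filter_mono (nhdsWithin_mono _ (fun x hx => ne_of_gt hx))
    filter_upwards [h2, self_mem_nhdsWithin] with β hβ hβ0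
    have : slope h 0 β = h β / β := by
      simp [slope_def_field, hh0]
    rw [this] at hβ
    have hβ0' : (0:ℝ) < β := hβ0
    have heq : h β = (h β / β) * β := (div_mul_cancel₀ _ (ne_of_gt hβ0')).symm
    rw [heq]
    exact mul_pos hβ hβ0'
  rw [eventually_nhdsWithin_iff] at hev
  rcases Metric.eventually_nhds_iff.mp hev with ⟨ε, hε, hball⟩
  refine ⟨ε, hε, fun β hβ0 hβε => ?_⟩
  have hhβ : 0 < h β := by
    apply hball (by rw [Real.dist_eq]; rw [sub_zero]; rwa [abs_of_pos hβ0]) hβ0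
  -- unfold
  have hS : (0:ℝ) < ∑ d, Real.exp (β * u d) := by
    apply Finset.sum_pos (fun d _ => Real.exp_pos _)
    exact Finset.univ_nonempty_iff.mpr (Fin.pos_iff_nonempty.mp (Nat.lt_of_lt_of_le Nat.zero_lt_one hD))
  have hwsum : ∑ d, s d * (w d β) ^ 2
      = (∑ d, s d * (Real.exp (β * u d)) ^ 2) / (∑ d, Real.exp (β * u d)) ^ 2 := by
    rw [Finset.sum_div]
    apply Finset.sum_congr rfl
    intro d _
    rw [hw, div_pow, mul_div_assoc]
  rw [hwsum]
  rw [lt_div_iff₀ (by positivity)]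
  have h2 : 0 < (D : ℝ)^2 := by positivity
  rw [hh_def] at hhβ
  simp only at hhβ
  rw [div_mul_eq_mul_div, div_mul_eq_mul_div, div_lt_iff₀ h2, one_mul]
  linarith [hhβ]
end

section
/- Let (Ω, μ) be a probability space, D ≥ 1, c > 0, and s : Fin D → ℝ with s_d ≥ 0 for all d and with the s_d not all equal. Let ξ : Fin D → Ω → ℝ be such that each ξ_d is integrable with ∫ ξ_d dμ = 0, and set u(ω)_d = c·√(s_d) + ξ_d(ω). Then the expected empirical covariance between the residuals and the squared gradient norms is strictly positive: ∫ Cov(u(ω), s) dμ(ω) > 0. -/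
open Real Finset MeasureTheory

/-- Key identity: `∑ᵢ∑ⱼ (xᵢ - xⱼ)(yᵢ - yⱼ) = 2 (D ∑ xy - ∑x ∑y)`. -/
lemma double_sum_identity {D : ℕ} (x y : Fin D → ℝ) :
    ∑ i, ∑ j, (x i - x j) * (y i - y j)
      = 2 * ((D : ℝ) * ∑ d, x d * y d - (∑ d, x d) * (∑ d, y d)) := by
  have : ∀ i : Fin D, ∑ j, (x i - x j) * (y i - y j)
      = (D : ℝ) * (x i * y i) - x i * (∑ d, y d) - (∑ d, x d) * y i
        + ∑ d, x d * y d := by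
    intro i
    simp only [sub_mul, mul_sub, Finset.sum_sub_distrib, Finset.sum_const,
      Finset.card_univ, Fintype.card_fin, ← Finset.mul_sum, ← Finset.sum_mul,
      nsmul_eq_mul]
    ring
  simp only [this, Finset.sum_add_distrib, Finset.sum_sub_distrib,
    Finset.sum_const, Finset.card_univ, Fintype.card_fin, nsmul_eq_mul,
    ← Finset.mul_sum, ← Finset.sum_mul]
  ring

/-- Under the linear residual model with `c > 0` and not-all-equal nonnegative `s`,
the expected empirical covariance between residuals and squared gradient norms is
strictly positive. -/
theorem expected_cov_pos_linear_residual_model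
    {Ω : Type*} [MeasurableSpace Ω] (μ : Measure Ω) [IsProbabilityMeasure μ]
    (D : ℕ) (hD : 1 ≤ D) (c : ℝ) (hc : 0 < c)
    (s : Fin D → ℝ) (hs : ∀ d, 0 ≤ s d)
    (hne : ∃ i j : Fin D, s i ≠ s j)
    (ξ : Fin D → Ω → ℝ)
    (hint : ∀ d, Integrable (ξ d) μ)
    (hmean : ∀ d, ∫ ω, ξ d ω ∂μ = 0)
    (u : Ω → Fin D → ℝ)
    (hu : ∀ ω d, u ω d = c * Real.sqrt (s d) + ξ d ω)
    (Cov : (Fin D → ℝ) → (Fin D → ℝ) → ℝ)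
    (hCov : ∀ x y : Fin D → ℝ, Cov x y =
      (1 / (D : ℝ)) * ∑ d, (x d - (1 / (D : ℝ)) * ∑ i, x i) *
        (y d - (1 / (D : ℝ)) * ∑ i, y i)) :
    0 < ∫ ω, Cov (u ω) s ∂μ := by
  have hD0 : (0 : ℝ) < (D : ℝ) := by exact_mod_cast hD
  set w : Fin D → ℝ := fun d => (1 / (D : ℝ)) * (s d - (1 / (D : ℝ)) * ∑ i, s i)
    with hw
  -- The centered sum of `s` vanishes.
  have hzero : ∑ d : Fin D, (s d - (1 / (D : ℝ)) * ∑ i, s i) = 0 := by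
    rw [Finset.sum_sub_distrib, Finset.sum_const, Finset.card_univ,
      Fintype.card_fin, nsmul_eq_mul]
    field_simp
    ring
  -- `Cov x s` is linear in `x`.
  have hlin : ∀ x : Fin D → ℝ, Cov x s = ∑ d, x d * w d := by
    intro x
    rw [hCov]
    have : ∀ d : Fin D, (x d - (1 / (D : ℝ)) * ∑ i, x i) *
        (s d - (1 / (D : ℝ)) * ∑ i, s i)
        = x d * ((s d - (1 / (D : ℝ)) * ∑ i, s i))
          - ((1 / (D : ℝ)) * ∑ i, x i) * (s d - (1 / (D : ℝ)) * ∑ i, s i) := by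
      intro d; ring
    simp only [this, Finset.sum_sub_distrib, ← Finset.mul_sum, hzero, mul_zero,
      sub_zero]
    rw [Finset.mul_sum]
    refine Finset.sum_congr rfl fun d _ => ?_
    simp only [hw]; ring
  -- Pointwise decomposition of the integrand.
  have hpt : ∀ ω, Cov (u ω) s
      = (∑ d, (c * Real.sqrt (s d)) * w d) + ∑ d, ξ d ω * w d := by
    intro ω
    rw [hlin, ← Finset.sum_add_distrib]
    refine Finset.sum_congr rfl fun d _ => ?_
    rw [hu]; ring
  -- Compute the integral.
  have hint2 : Integrable (fun ω => ∑ d, ξ d ω * w d) μ :=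
    integrable_finset_sum _ fun d _ => (hint d).mul_const _
  have hI : ∫ ω, Cov (u ω) s ∂μ = ∑ d, (c * Real.sqrt (s d)) * w d := by
    calc ∫ ω, Cov (u ω) s ∂μ
        = ∫ ω, ((∑ d, (c * Real.sqrt (s d)) * w d) + ∑ d, ξ d ω * w d) ∂μ := by
          exact integral_congr_ae (Filter.Eventually.of_forall hpt)
      _ = (∑ d, (c * Real.sqrt (s d)) * w d) + ∫ ω, ∑ d, ξ d ω * w d ∂μ := by
          rw [integral_add (integrable_const _) hint2, integral_const]
          simp
      _ = ∑ d, (c * Real.sqrt (s d)) * w d := by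
          rw [integral_finset_sum _ fun d _ => (hint d).mul_const _]
          simp [integral_mul_const, hmean]
  rw [hI]
  -- Reduce to the Chebyshev-type strict inequality.
  set x : Fin D → ℝ := fun d => Real.sqrt (s d) with hx
  have key : 0 < (D : ℝ) * (∑ d, x d * s d) - (∑ d, x d) * (∑ d, s d) := by
    have hdouble := double_sum_identity x s
    have hterm : ∀ i j : Fin D, 0 ≤ (x i - x j) * (s i - s j) := by
      intro i j
      rcases le_total (s i) (s j) with h | h
      · have h1 := Real.sqrt_le_sqrt h
        nlinarith
      · exact mul_nonneg (sub_nonneg.2 (Real.sqrt_le_sqrt h)) (sub_nonneg.2 h)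
    have hstrict : ∀ i j : Fin D, s i ≠ s j → 0 < (x i - x j) * (s i - s j) := by
      intro i j h
      rcases h.lt_or_gt with h | h
      · exact mul_pos_of_neg_of_neg
          (sub_neg.2 (Real.sqrt_lt_sqrt (hs i) h)) (sub_neg.2 h)
      · exact mul_pos (sub_pos.2 (Real.sqrt_lt_sqrt (hs j) h)) (sub_pos.2 h)
    obtain ⟨i, j, hij⟩ := hne
    have hpos : 0 < ∑ i, ∑ j, (x i - x j) * (s i - s j) := by
      refine Finset.sum_pos' (fun i _ => Finset.sum_nonneg fun j _ => hterm i j)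
        ⟨i, Finset.mem_univ i, ?_⟩
      exact Finset.sum_pos' (fun j _ => hterm i j)
        ⟨j, Finset.mem_univ j, hstrict i j hij⟩
    nlinarith [hdouble, hpos]
  -- Conclude.
  have : ∑ d, (c * Real.sqrt (s d)) * w d
      = c * (1 / (D : ℝ))^2 * ((D : ℝ) * (∑ d, x d * s d)
          - (∑ d, x d) * (∑ d, s d)) := by
    have expand : ∀ d : Fin D, (c * Real.sqrt (s d)) * w d =
        (c * (1 / (D : ℝ))) * (Real.sqrt (s d) * s d)
          - (c * (1 / (D : ℝ))^2) * (Real.sqrt (s d) * ∑ i, s i) := by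
      intro d; simp only [hw]; ring
    simp only [expand, Finset.sum_sub_distrib, ← Finset.mul_sum,
      ← Finset.sum_mul, hx]
    have hD' : (D : ℝ) ≠ 0 := ne_of_gt hD0
    field_simp
  rw [this]
  positivity
end

section
/- Let G ≥ 1 and let a, b : Fin G → ℝ be two score sequences (the pivot-dimension reward and the weighted total reward of each rollout). Define the strict partial order i ≺ j iff a(i) < a(j) and b(i) < b(j). Suppose σ : Fin G ≃ Fin G is a sorting permutation satisfying: for all indices p < q, either a(σ(p)) < a(σ(q)), or a(σ(p)) = a(σ(q)) and b(σ(p)) ≥ b(σ(q)). Then for any subset M ⊆ Fin G, M is a chain for ≺ (any two distinct elements of M are comparable under ≺) if and only if b ∘ σ is strictly increasing on σ⁻¹(M), i.e., for all p, q ∈ σ⁻¹(M) with p < q one has b(σ(p)) < b(σ(q)). -/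
/-- Correctness lemma for the `LargestSubset` algorithm: after sorting by the pivot
coordinate ascending with ties broken by the weighted total descending, a subset `M`
is a chain for the strict partial order `i ≺ j ⟺ a i < a j ∧ b i < b j` iff the
weighted totals are strictly increasing along the sorted order restricted to `M`. -/
theorem chain_iff_strictly_increasing_subsequence
    (G : ℕ) (hG : 1 ≤ G) (a b : Fin G → ℝ) (σ : Equiv.Perm (Fin G))
    (hsort : ∀ p q : Fin G, p < q →
      a (σ p) < a (σ q) ∨ (a (σ p) = a (σ q) ∧ b (σ q) ≤ b (σ p)))
    (M : Set (Fin G)) :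
    (∀ i ∈ M, ∀ j ∈ M, i ≠ j →
        (a i < a j ∧ b i < b j) ∨ (a j < a i ∧ b j < b i)) ↔
      (∀ p q : Fin G, σ p ∈ M → σ q ∈ M → p < q → b (σ p) < b (σ q)) := by
  constructor
  · intro h p q hpM hqM hpq
    have hne : σ p ≠ σ q := fun e => absurd (σ.injective e) (ne_of_lt hpq)
    rcases h _ hpM _ hqM hne with ⟨ha, hb⟩ | ⟨ha, hb⟩
    · exact hb
    · rcases hsort p q hpq with h1 | ⟨h1, _⟩
      · exact absurd h1 (not_lt.2 ha.le)
      · exact absurd h1 (ne_of_gt ha)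
  · intro h i hiM j hjM hij
    set p := σ.symm i with hp
    set q := σ.symm j with hq
    have hpq : p ≠ q := fun e => hij (by simpa [hp, hq] using congrArg σ e)
    have hi : σ p = i := σ.apply_symm_apply i
    have hj : σ q = j := σ.apply_symm_apply j
    rcases lt_or_gt_of_ne hpq with hlt | hlt
    · left
      have hb : b i < b j := by
        have := h p q (by rw [hi]; exact hiM) (by rw [hj]; exact hjM) hlt
        rwa [hi, hj] at this
      refine ⟨?_, hb⟩
      rcases hsort p q hlt with h1 | ⟨_, h2⟩
      · rwa [hi, hj] at h1
      · rw [hi, hj] at h2; exact absurd h2 (not_le.2 hb)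
    · right
      have hb : b j < b i := by
        have := h q p (by rw [hj]; exact hjM) (by rw [hi]; exact hiM) hlt
        rwa [hi, hj] at this
      refine ⟨?_, hb⟩
      rcases hsort q p hlt with h1 | ⟨_, h2⟩
      · rwa [hi, hj] at h1
      · rw [hi, hj] at h2; exact absurd h2 (not_le.2 hb)
end
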